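/- For p ∈ (0,1/2) and real x with 0 < x < 1/p, h_p(x) ≥ (1 − 2(p/(1-p))^2)·(2px/(1-px) + (p/(1-p))·p^2x/(1-p^2x)), where h_p(x) = 2H_p(px) + (p/(1-p))H_p(p^2 x) and H_p(z) = ∑_{l≥1} Φ_p(l)^2 z^l. -/

import Mathlib

noncomputable def Phi (p : ℝ) (l : ℕ) : ℝ :=
  ∏ k ∈ Finset.Icc 1 l, (1 - p) / (1 - p + p ^ (k + 1))

noncomputable def H (p : ℝ) (z : ℝ) : ℝ :=
  ∑' l : ℕ, Phi p (l + 1) ^ 2 * z ^ (l + 1)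

noncomputable def h (p : ℝ) (x : ℝ) : ℝ :=
  2 * H p (p * x) + (p / (1 - p)) * H p (p ^ 2 * x)

/-!
Each factor of `Φ_p(l)` is at least `1 - p^(k+1)/(1-p)`, so by the Weierstrass product
inequality `Φ_p(l) ≥ 1 - ∑_{k ≥ 1} p^(k+1)/(1-p) = 1 - (p/(1-p))^2`, and hence
`Φ_p(l)^2 ≥ 1 - 2(p/(1-p))^2`. Comparing `H_p(z)` termwise with `∑_{l ≥ 1} z^l = z/(1-z)`
gives the bound for each of the two `H_p` terms of `h_p`.
-/

open Finset

section OrderedAlgebra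

variable {ι R K : Type*}

theorem one_sub_sum_le_prod_one_sub [CommRing R] [LinearOrder R] [IsStrictOrderedRing R]
    {s : Finset ι} {f : ι → R} (h0 : ∀ i ∈ s, 0 ≤ f i) (h1 : ∀ i ∈ s, f i ≤ 1) :
    1 - ∑ i ∈ s, f i ≤ ∏ i ∈ s, (1 - f i) := by
  induction s using Finset.cons_induction with
  | empty => simp
  | cons a s _ ih =>
    simp only [mem_cons, forall_eq_or_imp] at h0 h1
    rw [sum_cons, prod_cons]
    have hs : 0 ≤ ∑ i ∈ s, f i := sum_nonneg h0.2
    nlinarith [ih h0.2 h1.2, mul_nonneg h0.1 hs]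

variable [Field K] [LinearOrder K] [IsStrictOrderedRing K]

theorem one_sub_div_le_div_add {a b : K} (ha : 0 < a) (hb : 0 ≤ b) :
    1 - b / a ≤ a / (a + b) := by
  rw [le_div_iff₀ (by positivity)]
  have : (1 - b / a) * (a + b) = a - b ^ 2 / a := by field_simp; ring
  rw [this]
  linarith [div_nonneg (sq_nonneg b) ha.le]

theorem sum_Icc_pow_succ_le {p : K} (hp : 0 ≤ p) (hp1 : p < 1) (l : ℕ) :
    ∑ k ∈ Icc 1 l, p ^ (k + 1) ≤ p ^ 2 / (1 - p) := by
  rw [← Ico_add_one_right_eq_Icc, sum_Ico_add' (fun i => p ^ i)]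
  exact geom_sum_Ico_le_of_lt_one hp hp1

end OrderedAlgebra

theorem mul_div_one_sub_le_tsum_mul_pow_succ {a : ℕ → ℝ} {c z : ℝ} (hc : ∀ l, c ≤ a l)
    (ha : ∀ l, |a l| ≤ 1) (hz0 : 0 ≤ z) (hz1 : z < 1) :
    c * (z / (1 - z)) ≤ ∑' l, a l * z ^ (l + 1) := by
  have hgeom : HasSum (fun l : ℕ => z ^ (l + 1)) (z / (1 - z)) := by
    simpa [pow_succ, div_eq_mul_inv, mul_comm] using
      (hasSum_geometric_of_lt_one hz0 hz1).mul_left z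
  have hsum : Summable (fun l => a l * z ^ (l + 1)) :=
    hgeom.summable.of_norm_bounded fun l => by
      rw [norm_mul, norm_pow, Real.norm_eq_abs, Real.norm_eq_abs, abs_of_nonneg hz0]
      exact mul_le_of_le_one_left (by positivity) (ha l)
  rw [← (hgeom.mul_left c).tsum_eq]
  exact (hgeom.summable.mul_left c).tsum_le_tsum
    (fun l => mul_le_mul_of_nonneg_right (hc l) (by positivity)) hsum

theorem abs_Phi_le_one {p : ℝ} (hp : 0 ≤ p) (hp1 : p ≤ 1) (l : ℕ) : |Phi p l| ≤ 1 := by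
  rw [Phi, abs_prod]
  refine prod_le_one (fun _ _ => abs_nonneg _) fun k _ => ?_
  have hpk : 0 ≤ p ^ (k + 1) := pow_nonneg hp _
  rw [abs_div, abs_of_nonneg (sub_nonneg.2 hp1), abs_of_nonneg (by linarith)]
  exact div_le_one_of_le₀ (by linarith) (by linarith)

theorem one_sub_div_sq_le_Phi {p : ℝ} (hp : 0 ≤ p) (hp1 : p ≤ 1 / 2) (l : ℕ) :
    1 - (p / (1 - p)) ^ 2 ≤ Phi p l := by
  have h1p : 0 < 1 - p := by linarith
  have hf1 : ∀ k ∈ Icc 1 l, p ^ (k + 1) / (1 - p) ≤ 1 := fun k hk => by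
    rw [div_le_one h1p]
    calc p ^ (k + 1) ≤ p ^ 2 :=
          pow_le_pow_of_le_one hp (by linarith) (by simp at hk; omega)
      _ ≤ 1 - p := by nlinarith
  calc 1 - (p / (1 - p)) ^ 2 = 1 - p ^ 2 / (1 - p) / (1 - p) := by field_simp
    _ ≤ 1 - ∑ k ∈ Icc 1 l, p ^ (k + 1) / (1 - p) := by
        rw [← sum_div]
        gcongr
        exact sum_Icc_pow_succ_le hp (by linarith) l
    _ ≤ ∏ k ∈ Icc 1 l, (1 - p ^ (k + 1) / (1 - p)) :=
        one_sub_sum_le_prod_one_sub (fun _ _ => by positivity) hf1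
    _ ≤ Phi p l :=
        prod_le_prod (fun k hk => sub_nonneg.2 (hf1 k hk))
          fun k _ => one_sub_div_le_div_add h1p (pow_nonneg hp _)

theorem one_sub_two_mul_le_Phi_sq {p : ℝ} (hp : 0 ≤ p) (hp1 : p ≤ 1 / 2) (l : ℕ) :
    1 - 2 * (p / (1 - p)) ^ 2 ≤ Phi p l ^ 2 := by
  have hq : p / (1 - p) ≤ 1 := (div_le_one (by linarith)).2 (by linarith)
  have hc : 0 ≤ 1 - (p / (1 - p)) ^ 2 := by nlinarith [div_nonneg hp (by linarith : 0 ≤ 1 - p)]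
  calc 1 - 2 * (p / (1 - p)) ^ 2 ≤ (1 - (p / (1 - p)) ^ 2) ^ 2 := by nlinarith
    _ ≤ Phi p l ^ 2 := pow_le_pow_left₀ hc (one_sub_div_sq_le_Phi hp hp1 l) 2

theorem mul_div_one_sub_le_H {p z : ℝ} (hp : 0 ≤ p) (hp1 : p ≤ 1 / 2) (hz0 : 0 ≤ z)
    (hz1 : z < 1) : (1 - 2 * (p / (1 - p)) ^ 2) * (z / (1 - z)) ≤ H p z :=
  mul_div_one_sub_le_tsum_mul_pow_succ (fun l => one_sub_two_mul_le_Phi_sq hp hp1 (l + 1))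
    (fun l => by
      rw [abs_pow]
      exact pow_le_one₀ (abs_nonneg _) (abs_Phi_le_one hp (by linarith) _))
    hz0 hz1

theorem stmt_13 (p : ℝ) (hp : 0 < p) (hp1 : p < 1 / 2) (x : ℝ) (hx0 : 0 < x)
    (hx : x < 1 / p) :
    h p x ≥ (1 - 2 * (p / (1 - p)) ^ 2) *
      (2 * p * x / (1 - p * x) + (p / (1 - p)) * (p ^ 2 * x / (1 - p ^ 2 * x))) := by
  have hpx : p * x < 1 := by rwa [lt_div_iff₀ hp, mul_comm] at hx
  have hp2x : p ^ 2 * x < 1 := by nlinarith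
  have H1 := mul_div_one_sub_le_H hp.le hp1.le (by positivity) hpx
  have H2 := mul_div_one_sub_le_H hp.le hp1.le (by positivity) hp2x
  have hq : 0 ≤ p / (1 - p) := div_nonneg hp.le (by linarith)
  calc (1 - 2 * (p / (1 - p)) ^ 2) *
        (2 * p * x / (1 - p * x) + (p / (1 - p)) * (p ^ 2 * x / (1 - p ^ 2 * x)))
      = 2 * ((1 - 2 * (p / (1 - p)) ^ 2) * (p * x / (1 - p * x)))
        + (p / (1 - p)) * ((1 - 2 * (p / (1 - p)) ^ 2) * (p ^ 2 * x / (1 - p ^ 2 * x))) := by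
        ring
    _ ≤ h p x := add_le_add (by linarith) (mul_le_mul_of_nonneg_left H2 hq)
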